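/- Let G be a cubic graph and M1, M2 disjoint matchings with |M1 ∪ M2| maximum. Then every connected component of G − M1 − M2 is acyclic and has at most three edges; hence every component is a single vertex, a single edge (P2), a path with two edges (P3), a path with three edges (P4), or a star K_{1,3}. -/

import Mathlib

open SimpleGraph

/-- A matching in `G` given as a set of edges: edges of `G`, pairwise vertex-disjoint. -/
def IsMatchingSet {V : Type*} (G : SimpleGraph V) (M : Set (Sym2 V)) : Prop :=
  M ⊆ G.edgeSet ∧ ∀ e ∈ M, ∀ f ∈ M, e ≠ f → ∀ v, v ∈ e → v ∉ f

/-- `M1, M2` are disjoint matchings of `G` with `|M1 ∪ M2|` maximum over all pairs of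
disjoint matchings of `G`. -/
def MaxDisjointPair {V : Type*} (G : SimpleGraph V) (M1 M2 : Set (Sym2 V)) : Prop :=
  IsMatchingSet G M1 ∧ IsMatchingSet G M2 ∧ Disjoint M1 M2 ∧
  ∀ N1 N2 : Set (Sym2 V), IsMatchingSet G N1 → IsMatchingSet G N2 → Disjoint N1 N2 →
    (N1 ∪ N2).ncard ≤ (M1 ∪ M2).ncard

/-- Adjacency in `Ĝ = G − M1 − M2`: adjacency via an edge of `G` not in `M1 ∪ M2`. -/
def hatAdj {V : Type*} (G : SimpleGraph V) (M1 M2 : Set (Sym2 V)) (x y : V) : Prop :=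
  G.Adj x y ∧ s(x, y) ∉ M1 ∪ M2

/-!
Write `Ĝ = G − M1 − M2`. Maximality of `|M1 ∪ M2|` gives two local facts. Every edge of `Ĝ`
has an endpoint covered by `M1`, or it could be added to `M1`. An edge `uv` of `Ĝ` with `u` free
in `M2` and `v` free in `M1` has its ends joined by an `(M1 ∪ M2)`-path, or swapping `M1` and
`M2` on the component of `v` would let `uv` join `M2`. As `M1 ∪ M2` has maximum degree two, its
components have at most two leaves, so there is no path `u v w` in `Ĝ` with `u, w` free in
`M2` and `v` free in `M1`. Since `G` is cubic, a vertex covered by one matching has `Ĝ`-degree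
at most two, and one covered by both has `Ĝ`-degree at most one. Together these facts show that
two vertices of `Ĝ`-degree at least two are never at distance two. A cycle would contain such a
pair; and a component with this property is a star or a double star, whose centres the degree
bounds limit to three edges in total.
-/

namespace SimpleGraph

variable {V : Type*} {G : SimpleGraph V} {M : Set (Sym2 V)} {u v w x y : V}

theorem Reachable.mem_of_forall_adj_mem {S : Set V} (hS : ∀ x ∈ S, ∀ y, G.Adj x y → y ∈ S)
    (h : G.Reachable u v) (hu : u ∈ S) : v ∈ S :=
  h.mem_subgraphVerts (H := (⊤ : G.Subgraph).induce S)
    (fun x hx y hxy => ⟨hx, hS x hx y hxy, hxy⟩) hu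

theorem reachable_fromEdgeSet_of_mem {e : Sym2 V} (he : e ∈ M) (hx : x ∈ e) (hy : y ∈ e) :
    (fromEdgeSet M).Reachable x y := by
  rcases eq_or_ne x y with rfl | hxy
  · rfl
  · have hxy' : s(x, y) ∈ M := (Sym2.mem_and_mem_iff hxy).mp ⟨hx, hy⟩ ▸ he
    exact Adj.reachable ⟨hxy', hxy⟩

theorem Adj.deleteEdges_union_comm {s t : Set (Sym2 V)} (h : (G.deleteEdges (s ∪ t)).Adj x y) :
    (G.deleteEdges (t ∪ s)).Adj x y :=
  Set.union_comm s t ▸ h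

theorem ncard_incidenceSet_eq_ncard_neighborSet (x : V) :
    (G.incidenceSet x).ncard = (G.neighborSet x).ncard := by
  classical exact Nat.card_congr (G.incidenceSetEquivNeighborSet x)

theorem ncard_neighborSet_eq_degree [Fintype (G.neighborSet x)] :
    (G.neighborSet x).ncard = G.degree x :=
  Set.ncard_eq_toFinset_card' _

theorem Walk.IsPath.ncard_neighborSet_toSubgraph_eq_two {p : G.Walk u v} (hp : p.IsPath)
    (hx : x ∈ p.support) (hxu : x ≠ u) (hxv : x ≠ v) :
    (p.toSubgraph.neighborSet x).ncard = 2 := by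
  obtain ⟨i, rfl, hi⟩ := p.mem_support_iff_exists_getVert.mp hx
  refine hp.ncard_neighborSet_toSubgraph_internal_eq_two (fun h => hxu (by simp [h])) ?_
  exact hi.lt_of_ne fun h => hxv (by simp [h])

variable [Finite V]

theorem ncard_neighborSet_deleteEdges_add_ncard_le [Fintype (G.neighborSet x)]
    {s : Set (Sym2 V)} {T : Set V} (hT : ∀ t ∈ T, G.Adj x t ∧ s(x, t) ∈ s) :
    ((G.deleteEdges s).neighborSet x).ncard + T.ncard ≤ G.degree x := by
  have hdisj : Disjoint ((G.deleteEdges s).neighborSet x) T :=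
    Set.disjoint_right.mpr fun t ht h => (deleteEdges_adj.mp h).2 (hT t ht).2
  rw [← Set.ncard_union_eq hdisj, ← ncard_neighborSet_eq_degree]
  exact Set.ncard_le_ncard
    (Set.union_subset (fun t ht => (deleteEdges_adj.mp ht).1) fun t ht => (hT t ht).1)

theorem ncard_neighborSet_deleteEdges_le_degree [Fintype (G.neighborSet x)]
    (s : Set (Sym2 V)) : ((G.deleteEdges s).neighborSet x).ncard ≤ G.degree x := by
  simpa using ncard_neighborSet_deleteEdges_add_ncard_le (G := G) (s := s) (T := ∅) (by simp)

theorem Walk.IsCycle.one_lt_ncard_neighborSet {p : G.Walk u u} (hp : p.IsCycle)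
    (hx : x ∈ p.support) : 1 < (G.neighborSet x).ncard :=
  calc 1 < (p.toSubgraph.neighborSet x).ncard := by
        rw [hp.ncard_neighborSet_toSubgraph_eq_two hx]; norm_num
    _ ≤ (G.neighborSet x).ncard := Set.ncard_le_ncard (p.toSubgraph.neighborSet_subset x)

theorem Reachable.eq_or_eq_of_ncard_neighborSet_le_one
    (hdeg : ∀ x, (G.neighborSet x).ncard ≤ 2) (hu : (G.neighborSet u).ncard ≤ 1)
    (hv : (G.neighborSet v).ncard ≤ 1) (hw : (G.neighborSet w).ncard ≤ 1) (huv : u ≠ v)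
    (hrv : G.Reachable u v) (hrw : G.Reachable u w) : w = u ∨ w = v := by
  classical
  set p := hrv.some.bypass
  have hp : p.IsPath := hrv.some.bypass_isPath
  have hnil : ¬ p.Nil := fun h => huv h.eq
  -- A path between two leaves uses every edge at each of its vertices.
  have hclosed : ∀ x ∈ p.toSubgraph.verts, ∀ y, G.Adj x y → p.toSubgraph.Adj x y := by
    intro x hx y hxy
    have hle : (G.neighborSet x).ncard ≤ (p.toSubgraph.neighborSet x).ncard := by
      by_cases hxu : x = u
      · subst hxu; simpa [hp.neighborSet_toSubgraph_startpoint hnil] using hu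
      by_cases hxv : x = v
      · subst hxv; simpa [hp.neighborSet_toSubgraph_endpoint hnil] using hv
      rw [hp.ncard_neighborSet_toSubgraph_eq_two (p.mem_verts_toSubgraph.mp hx) hxu hxv]
      exact hdeg x
    have heq := Set.eq_of_subset_of_ncard_le (p.toSubgraph.neighborSet_subset x) hle
    exact heq.symm.subset hxy
  have hwp := hrw.mem_subgraphVerts hclosed p.start_mem_verts_toSubgraph
  by_contra! hne
  have := hp.ncard_neighborSet_toSubgraph_eq_two (p.mem_verts_toSubgraph.mp hwp) hne.1 hne.2
  have := Set.ncard_le_ncard (p.toSubgraph.neighborSet_subset w)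
  omega

theorem mem_incidenceSet_union_of_reachable
    (hu : ∀ z, G.Adj u z → z ≠ v → (G.neighborSet z).ncard ≤ 1)
    (hv : ∀ z, G.Adj v z → z ≠ u → (G.neighborSet z).ncard ≤ 1)
    (hx : G.Reachable u x) (hxy : G.Adj x y) :
    s(x, y) ∈ G.incidenceSet u ∪ G.incidenceSet v := by
  have leaf : ∀ {z a b}, (G.neighborSet z).ncard ≤ 1 → G.Adj z a → G.Adj z b → a = b :=
    fun hz ha hb => (Set.ncard_le_one_iff).mp hz ha hb
  set S : Set V := {z | z = u ∨ z = v ∨ G.Adj u z ∨ G.Adj v z}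
  have hS : ∀ x ∈ S, ∀ y, G.Adj x y → y ∈ S := by
    rintro x (rfl | rfl | hx | hx) y hxy
    · exact .inr (.inr (.inl hxy))
    · exact .inr (.inr (.inr hxy))
    · by_cases hxv : x = v
      · subst hxv; exact .inr (.inr (.inr hxy))
      · exact .inl (leaf (hu x hx hxv) hxy hx.symm)
    · by_cases hxu : x = u
      · subst hxu; exact .inr (.inr (.inl hxy))
      · exact .inr (.inl (leaf (hv x hx hxu) hxy hx.symm))
  have hedge : s(x, y) ∈ G.edgeSet := hxy
  rcases hx.mem_of_forall_adj_mem hS (.inl rfl) with rfl | rfl | hux | hvx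
  · exact .inl ⟨hedge, Sym2.mem_mk_left _ _⟩
  · exact .inr ⟨hedge, Sym2.mem_mk_left _ _⟩
  · by_cases hxv : x = v
    · exact .inr ⟨hedge, hxv ▸ Sym2.mem_mk_left _ _⟩
    · exact .inl ⟨hedge, leaf (hu x hux hxv) hxy hux.symm ▸ Sym2.mem_mk_right _ _⟩
  · by_cases hxu : x = u
    · exact .inl ⟨hedge, hxu ▸ Sym2.mem_mk_left _ _⟩
    · exact .inr ⟨hedge, leaf (hv x hvx hxu) hxy hvx.symm ▸ Sym2.mem_mk_right _ _⟩

theorem edges_subset_incidenceSet_union {c : G.ConnectedComponent}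
    (hc : G.connectedComponentMk u = c)
    (hu : ∀ z, G.Adj u z → z ≠ v → (G.neighborSet z).ncard ≤ 1)
    (hv : ∀ z, G.Adj v z → z ≠ u → (G.neighborSet z).ncard ≤ 1) :
    {e ∈ G.edgeSet | ∀ x ∈ e, G.connectedComponentMk x = c} ⊆
      G.incidenceSet u ∪ G.incidenceSet v := by
  rintro ⟨x, y⟩ ⟨hxy, hec⟩
  exact mem_incidenceSet_union_of_reachable hu hv
    (ConnectedComponent.exact (hc.trans (hec x (Sym2.mem_mk_left x y)).symm)) hxy

theorem isAcyclic_of_ncard_neighborSet_le_one_of_adj_adj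
    (hbranch : ∀ a b c, G.Adj a b → G.Adj b c → a ≠ c → 1 < (G.neighborSet a).ncard →
      (G.neighborSet c).ncard ≤ 1) : G.IsAcyclic := by
  intro v p hp
  have hnil := hp.not_nil
  have hsnd := hp.one_lt_ncard_neighborSet (p.getVert_mem_support 1)
  have hpen : 1 < (G.neighborSet p.penultimate).ncard :=
    hp.one_lt_ncard_neighborSet (p.getVert_mem_support _)
  have := hbranch _ _ _ (p.adj_snd hnil).symm (p.adj_penultimate hnil).symm
    hp.snd_ne_penultimate hsnd
  omega

/-- By `hbranch` a component is a star or a double star; `hpair` bounds the two centres of a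
double star. -/
theorem ncard_edges_connectedComponent_le_three
    (hbranch : ∀ a b c, G.Adj a b → G.Adj b c → a ≠ c → 1 < (G.neighborSet a).ncard →
      (G.neighborSet c).ncard ≤ 1)
    (hdeg : ∀ x, (G.neighborSet x).ncard ≤ 3)
    (hpair : ∀ u v, G.Adj u v → 1 < (G.neighborSet v).ncard → (G.neighborSet u).ncard ≤ 2)
    (c : G.ConnectedComponent) :
    {e ∈ G.edgeSet | ∀ x ∈ e, G.connectedComponentMk x = c}.ncard ≤ 3 := by
  have hI := ncard_incidenceSet_eq_ncard_neighborSet (G := G)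
  have star : ∀ u, G.connectedComponentMk u = c →
      (∀ z, G.Adj u z → (G.neighborSet z).ncard ≤ 1) →
      {e ∈ G.edgeSet | ∀ x ∈ e, G.connectedComponentMk x = c}.ncard ≤ 3 := by
    intro u hu hleaf
    have hsub := edges_subset_incidenceSet_union hu (fun z hz _ => hleaf z hz)
      fun z hz _ => hleaf z hz
    rw [Set.union_self] at hsub
    exact (Set.ncard_le_ncard hsub).trans (hI u ▸ hdeg u)
  by_cases hbr : ∃ u, G.connectedComponentMk u = c ∧ 1 < (G.neighborSet u).ncard
  · obtain ⟨u, hu, hdu⟩ := hbr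
    by_cases hv : ∃ v, G.Adj u v ∧ 1 < (G.neighborSet v).ncard
    · obtain ⟨v, huv, hdv⟩ := hv
      have hsub := edges_subset_incidenceSet_union hu
        (fun z hz hzv => hbranch v u z huv.symm hz (Ne.symm hzv) hdv)
        (fun z hz hzu => hbranch u v z huv hz (Ne.symm hzu) hdu)
      have hinter : 0 < (G.incidenceSet u ∩ G.incidenceSet v).ncard :=
        (Set.ncard_pos).mpr
          ⟨s(u, v), ⟨huv, Sym2.mem_mk_left u v⟩, ⟨huv, Sym2.mem_mk_right u v⟩⟩
      have := Set.ncard_union_add_ncard_inter (G.incidenceSet u) (G.incidenceSet v)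
      have := Set.ncard_le_ncard hsub
      have := hpair u v huv hdv
      have := hpair v u huv.symm hdu
      rw [hI, hI] at *
      omega
    · push Not at hv
      exact star u hu hv
  · push Not at hbr
    induction c using ConnectedComponent.ind with
    | h u =>
      exact star u rfl fun z hz =>
        hbr z (ConnectedComponent.connectedComponentMk_eq_of_adj hz).symm

end SimpleGraph

section Matchings

variable {V : Type*} {G : SimpleGraph V} {M M1 M2 : Set (Sym2 V)} {x y : V}

def Covers (M : Set (Sym2 V)) (x : V) : Prop := ∃ y, s(x, y) ∈ M

theorem covers_of_mem {e : Sym2 V} (he : e ∈ M) (hx : x ∈ e) : Covers M x :=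
  ⟨Sym2.Mem.other hx, (Sym2.other_spec hx).symm ▸ he⟩

namespace IsMatchingSet

theorem eq_of_mem_of_mem (hM : IsMatchingSet G M) {a b : V} (ha : s(x, a) ∈ M)
    (hb : s(x, b) ∈ M) : a = b := by
  by_contra hab
  have hne : s(x, a) ≠ s(x, b) := fun h => hab (Sym2.congr_right.mp h)
  exact hM.2 _ ha _ hb hne x (Sym2.mem_mk_left x a) (Sym2.mem_mk_left x b)

theorem insert (hM : IsMatchingSet G M) (h : G.Adj x y) (hx : ¬ Covers M x)
    (hy : ¬ Covers M y) : IsMatchingSet G (insert s(x, y) M) := by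
  refine ⟨Set.insert_subset h hM.1, ?_⟩
  have hfree : ∀ f ∈ M, ∀ t ∈ s(x, y), t ∉ f := by
    intro f hf t ht htf
    rcases Sym2.mem_iff.mp ht with rfl | rfl
    exacts [hx (covers_of_mem hf htf), hy (covers_of_mem hf htf)]
  rintro e (rfl | he) f (rfl | hf) hef t hte htf
  · exact hef rfl
  · exact hfree f hf t hte htf
  · exact hfree e he t htf hte
  · exact hM.2 e he f hf hef t hte htf

theorem diff_union_inter (h1 : IsMatchingSet G M1) (h2 : IsMatchingSet G M2) {E : Set (Sym2 V)}
    (hE : ∀ e ∈ M1, ∀ f ∈ M2, ∀ x ∈ e, x ∈ f → (e ∈ E ↔ f ∈ E)) :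
    IsMatchingSet G (M1 \ E ∪ M2 ∩ E) := by
  refine ⟨Set.union_subset (Set.sdiff_subset.trans h1.1) (Set.inter_subset_left.trans h2.1), ?_⟩
  rintro e (⟨he1, heE⟩ | ⟨he2, heE⟩) f (⟨hf1, hfE⟩ | ⟨hf2, hfE⟩) hef t hte htf
  · exact h1.2 e he1 f hf1 hef t hte htf
  · exact heE ((hE e he1 f hf2 t hte htf).mpr hfE)
  · exact hfE ((hE f hf1 e he2 t htf hte).mpr heE)
  · exact h2.2 e he2 f hf2 hef t hte htf

variable [Finite V]

theorem ncard_partners_le_one (hM : IsMatchingSet G M) : {y | s(x, y) ∈ M}.ncard ≤ 1 :=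
  (Set.ncard_le_one_iff).mpr hM.eq_of_mem_of_mem

theorem ncard_neighborSet_fromEdgeSet_le_two (h1 : IsMatchingSet G M1)
    (h2 : IsMatchingSet G M2) : ((fromEdgeSet (M1 ∪ M2)).neighborSet x).ncard ≤ 2 :=
  calc ((fromEdgeSet (M1 ∪ M2)).neighborSet x).ncard
      ≤ ({y | s(x, y) ∈ M1} ∪ {y | s(x, y) ∈ M2}).ncard :=
        Set.ncard_le_ncard fun _ hy => hy.1
    _ ≤ 1 + 1 := (Set.ncard_union_le _ _).trans
        (add_le_add h1.ncard_partners_le_one h2.ncard_partners_le_one)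

theorem ncard_neighborSet_fromEdgeSet_le_one (h1 : IsMatchingSet G M1) (hx : ¬ Covers M2 x) :
    ((fromEdgeSet (M1 ∪ M2)).neighborSet x).ncard ≤ 1 :=
  (Set.ncard_le_ncard fun y hy => hy.1.resolve_right fun h => hx ⟨y, h⟩).trans
    h1.ncard_partners_le_one

end IsMatchingSet

end Matchings

namespace MaxDisjointPair

variable {V : Type*} {G : SimpleGraph V} {M1 M2 : Set (Sym2 V)} {a b c u v w x y : V}

theorem symm (hmax : MaxDisjointPair G M1 M2) : MaxDisjointPair G M2 M1 :=
  ⟨hmax.2.1, hmax.1, hmax.2.2.1.symm, fun N1 N2 h1 h2 hd =>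
    Set.union_comm M2 M1 ▸ hmax.2.2.2 N1 N2 h1 h2 hd⟩

variable [Finite V]

theorem union_ne_insert (hmax : MaxDisjointPair G M1 M2) {N1 N2 : Set (Sym2 V)}
    (h1 : IsMatchingSet G N1) (h2 : IsMatchingSet G N2) (hd : Disjoint N1 N2) {e : Sym2 V}
    (he : e ∉ M1 ∪ M2) : N1 ∪ N2 ≠ insert e (M1 ∪ M2) := by
  intro h
  have := hmax.2.2.2 N1 N2 h1 h2 hd
  rw [h, Set.ncard_insert_of_notMem he] at this
  omega

theorem covers_or_covers_of_adj (hmax : MaxDisjointPair G M1 M2)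
    (h : (G.deleteEdges (M1 ∪ M2)).Adj x y) : Covers M1 x ∨ Covers M1 y := by
  by_contra! hxy
  obtain ⟨hG, he⟩ := deleteEdges_adj.mp h
  refine hmax.union_ne_insert (hmax.1.insert hG hxy.1 hxy.2) hmax.2.1 ?_ he Set.insert_union
  exact Set.disjoint_insert_left.mpr ⟨fun h' => he (.inr h'), hmax.2.2.1⟩

/-- If not, exchanging `M1` and `M2` on the `(M1 ∪ M2)`-component of `v` frees `v` in `M2`,
and `uv` can then be added to `M2`. -/
theorem reachable_of_adj (hmax : MaxDisjointPair G M1 M2)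
    (h : (G.deleteEdges (M1 ∪ M2)).Adj u v) (hu : ¬ Covers M2 u) (hv : ¬ Covers M1 v) :
    (fromEdgeSet (M1 ∪ M2)).Reachable v u := by
  by_contra hvu
  obtain ⟨hG, huv⟩ := deleteEdges_adj.mp h
  set E := {e : Sym2 V | ∃ x ∈ e, (fromEdgeSet (M1 ∪ M2)).Reachable v x}
  have hE : ∀ e ∈ M1 ∪ M2, e ∈ E → ∀ x ∈ e, (fromEdgeSet (M1 ∪ M2)).Reachable v x :=
    fun e he ⟨y, hy, hvy⟩ x hx => hvy.trans (reachable_fromEdgeSet_of_mem he hy hx)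
  have hE' : ∀ e ∈ M1, ∀ f ∈ M2, ∀ x ∈ e, x ∈ f → (e ∈ E ↔ f ∈ E) :=
    fun e he f hf x hxe hxf =>
      ⟨fun h => ⟨x, hxf, hE e (.inl he) h x hxe⟩,
        fun h => ⟨x, hxe, hE f (.inr hf) h x hxf⟩⟩
  have hN1 := hmax.1.diff_union_inter hmax.2.1 hE'
  have hN2 := hmax.2.1.diff_union_inter hmax.1
    fun e he f hf x hxe hxf => (hE' f hf e he x hxf hxe).symm
  have hu' : ¬ Covers (M2 \ E ∪ M1 ∩ E) u := by
    rintro ⟨y, ⟨h2, -⟩ | ⟨h1, hE1⟩⟩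
    · exact hu ⟨y, h2⟩
    · exact hvu (hE _ (.inl h1) hE1 u (Sym2.mem_mk_left u y))
  have hv' : ¬ Covers (M2 \ E ∪ M1 ∩ E) v := by
    rintro ⟨y, ⟨-, hnE⟩ | ⟨h1, -⟩⟩
    · exact hnE ⟨v, Sym2.mem_mk_left v y, .rfl⟩
    · exact hv ⟨y, h1⟩
  have hd := Set.disjoint_left.mp hmax.2.2.1
  refine hmax.union_ne_insert hN1 (hN2.insert hG hu' hv') ?_ huv ?_
  · rw [Set.disjoint_left]
    rintro e (⟨h1, hE1⟩ | ⟨h2, hE2⟩) (rfl | ⟨h2', hE2'⟩ | ⟨h1', hE1'⟩)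
    exacts [huv (.inl h1), hd h1 h2', hE1 hE1', huv (.inr h2), hE2' hE2, hd h1' h2]
  · ext e
    simp only [Set.mem_union, Set.mem_insert_iff, Set.mem_sdiff, Set.mem_inter_iff]
    tauto

theorem eq_of_adj_of_adj (hmax : MaxDisjointPair G M1 M2)
    (huv : (G.deleteEdges (M1 ∪ M2)).Adj u v) (hvw : (G.deleteEdges (M1 ∪ M2)).Adj v w)
    (hu : ¬ Covers M2 u) (hw : ¬ Covers M2 w) (hv : ¬ Covers M1 v) : u = w := by
  have hv' : ((fromEdgeSet (M1 ∪ M2)).neighborSet v).ncard ≤ 1 := by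
    rw [Set.union_comm]; exact hmax.2.1.ncard_neighborSet_fromEdgeSet_le_one hv
  rcases (hmax.reachable_of_adj huv hu hv).eq_or_eq_of_ncard_neighborSet_le_one
    (fun _ => hmax.1.ncard_neighborSet_fromEdgeSet_le_two hmax.2.1) hv'
    (hmax.1.ncard_neighborSet_fromEdgeSet_le_one hu)
    (hmax.1.ncard_neighborSet_fromEdgeSet_le_one hw) huv.ne.symm
    (hmax.reachable_of_adj hvw.symm hw hv) with h | h
  · exact absurd h.symm hvw.ne
  · exact h.symm

variable [G.LocallyFinite]

theorem ncard_neighborSet_le_two (hmax : MaxDisjointPair G M1 M2)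
    (hcubic : G.IsRegularOfDegree 3) (h : Covers M1 x ∨ Covers M2 x) :
    ((G.deleteEdges (M1 ∪ M2)).neighborSet x).ncard ≤ 2 := by
  obtain ⟨y, hy⟩ : ∃ y, s(x, y) ∈ M1 ∪ M2 :=
    h.elim (fun ⟨y, hy⟩ => ⟨y, .inl hy⟩) fun ⟨y, hy⟩ => ⟨y, .inr hy⟩
  have hG : G.Adj x y := hy.elim (fun h => hmax.1.1 h) fun h => hmax.2.1.1 h
  have := ncard_neighborSet_deleteEdges_add_ncard_le (G := G) (x := x) (s := M1 ∪ M2)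
    (T := {y}) (by simpa using And.intro hG hy)
  rw [Set.ncard_singleton, hcubic x] at this
  omega

theorem ncard_neighborSet_le_one (hmax : MaxDisjointPair G M1 M2)
    (hcubic : G.IsRegularOfDegree 3) (h1 : Covers M1 x) (h2 : Covers M2 x) :
    ((G.deleteEdges (M1 ∪ M2)).neighborSet x).ncard ≤ 1 := by
  obtain ⟨y1, hy1⟩ := h1
  obtain ⟨y2, hy2⟩ := h2
  have hne : y1 ≠ y2 := by
    rintro rfl
    exact Set.disjoint_left.mp hmax.2.2.1 hy1 hy2
  have := ncard_neighborSet_deleteEdges_add_ncard_le (G := G) (x := x) (s := M1 ∪ M2)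
    (T := {y1, y2})
    (by simpa using And.intro ⟨hmax.1.1 hy1, .inl hy1⟩ ⟨hmax.2.1.1 hy2, .inr hy2⟩)
  rw [Set.ncard_pair hne, hcubic x] at this
  omega

theorem ncard_neighborSet_le_two_of_adj (hmax : MaxDisjointPair G M1 M2)
    (hcubic : G.IsRegularOfDegree 3) (h : (G.deleteEdges (M1 ∪ M2)).Adj u v)
    (hv : 1 < ((G.deleteEdges (M1 ∪ M2)).neighborSet v).ncard) :
    ((G.deleteEdges (M1 ∪ M2)).neighborSet u).ncard ≤ 2 := by
  refine hmax.ncard_neighborSet_le_two hcubic ?_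
  by_contra! hu
  have h1 := (hmax.covers_or_covers_of_adj h).resolve_left hu.1
  have h2 := (hmax.symm.covers_or_covers_of_adj h.deleteEdges_union_comm).resolve_left hu.2
  exact (hmax.ncard_neighborSet_le_one hcubic h1 h2).not_gt hv

theorem ncard_neighborSet_le_one_of_adj_adj (hmax : MaxDisjointPair G M1 M2)
    (hcubic : G.IsRegularOfDegree 3) (hab : (G.deleteEdges (M1 ∪ M2)).Adj a b)
    (hbc : (G.deleteEdges (M1 ∪ M2)).Adj b c) (hac : a ≠ c)
    (ha : 1 < ((G.deleteEdges (M1 ∪ M2)).neighborSet a).ncard) :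
    ((G.deleteEdges (M1 ∪ M2)).neighborSet c).ncard ≤ 1 := by
  by_contra! hc
  have hb : 1 < ((G.deleteEdges (M1 ∪ M2)).neighborSet b).ncard :=
    (Set.one_lt_ncard_iff).mpr ⟨a, c, hab.symm, hbc, hac⟩
  have not_both : ∀ {x}, 1 < ((G.deleteEdges (M1 ∪ M2)).neighborSet x).ncard →
      Covers M1 x → ¬ Covers M2 x :=
    fun hx h1 h2 => (hmax.ncard_neighborSet_le_one hcubic h1 h2).not_gt hx
  by_cases hb1 : Covers M1 b
  · have hb2 := not_both hb hb1
    have ha2 :=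
      (hmax.symm.covers_or_covers_of_adj hab.symm.deleteEdges_union_comm).resolve_left hb2
    have hc2 := (hmax.symm.covers_or_covers_of_adj hbc.deleteEdges_union_comm).resolve_left hb2
    exact hac (hmax.symm.eq_of_adj_of_adj hab.deleteEdges_union_comm hbc.deleteEdges_union_comm
      (fun h => not_both ha h ha2) (fun h => not_both hc h hc2) hb2)
  · have ha1 := (hmax.covers_or_covers_of_adj hab.symm).resolve_left hb1
    have hc1 := (hmax.covers_or_covers_of_adj hbc).resolve_left hb1
    exact hac (hmax.eq_of_adj_of_adj hab hbc (not_both ha ha1) (not_both hc hc1) hb1)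

end MaxDisjointPair

theorem stmt6 {V : Type*} [Fintype V] (G : SimpleGraph V) [DecidableRel G.Adj]
    (hcubic : ∀ v : V, G.degree v = 3) (M1 M2 : Set (Sym2 V))
    (hmax : MaxDisjointPair G M1 M2) :
    (G.deleteEdges (M1 ∪ M2)).IsAcyclic ∧
      ∀ c : (G.deleteEdges (M1 ∪ M2)).ConnectedComponent,
        {e ∈ (G.deleteEdges (M1 ∪ M2)).edgeSet |
          ∀ v ∈ e, (G.deleteEdges (M1 ∪ M2)).connectedComponentMk v = c}.ncard ≤ 3 := by
  have hbranch a b c :=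
    hmax.ncard_neighborSet_le_one_of_adj_adj (a := a) (b := b) (c := c) hcubic
  have hdeg x : ((G.deleteEdges (M1 ∪ M2)).neighborSet x).ncard ≤ 3 :=
    (ncard_neighborSet_deleteEdges_le_degree _).trans (hcubic x).le
  exact ⟨isAcyclic_of_ncard_neighborSet_le_one_of_adj_adj hbranch,
    ncard_edges_connectedComponent_le_three hbranch hdeg
      fun _ _ => hmax.ncard_neighborSet_le_two_of_adj hcubic⟩
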